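/- arXiv:math-ph/0009033 — 2 statements merged into one kernel-verified Lean document; each statement's English description precedes it below -/
import Mathlib

section
/- Let f : ℝ → ℂ be smooth and compactly supported, let n ≥ 1 be an integer, and let χ : ℝ² → ℝ be smooth and compactly supported with χ ≡ 1 on an open set containing (supp f) × {0}. Define f̃ : ℝ² → ℂ by f̃(x,y) = (Σ_{k=0}^{n} f^{(k)}(x)·(iy)^k / k!) · χ(x,y). Then: (i) f̃(x,0) = f(x) for all x ∈ ℝ; (ii) the Cauchy–Riemann derivative ∂̄f̃(x,y) := (1/2)(∂_x f̃ + i ∂_y f̃)(x,y) vanishes for y = 0; and (iii) there exists a finite constant C such that |∂̄f̃(x,y)| ≤ C |y|^n for all (x,y) ∈ ℝ². -/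
open Complex

private noncomputable def aaP (f : ℝ → ℂ) (n : ℕ) (x y : ℝ) : ℂ :=
  ∑ k ∈ Finset.range (n + 1),
    iteratedDeriv k f x * (Complex.I * (y : ℂ)) ^ k / (k.factorial : ℂ)

private lemma aaP_zero (f : ℝ → ℂ) (n : ℕ) (x : ℝ) : aaP f n x 0 = f x := by
  unfold aaP
  rw [Finset.sum_eq_single 0]
  · simp
  · intro k _ hk
    simp [zero_pow hk]
  · intro h; simp at h

private lemma aaP_hasDerivAt_fst (f : ℝ → ℂ) (hf : ContDiff ℝ (⊤ : ℕ∞) f) (n : ℕ) (x y : ℝ) :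
    HasDerivAt (fun s => aaP f n s y)
      (∑ k ∈ Finset.range (n + 1),
        iteratedDeriv (k + 1) f x * (Complex.I * (y : ℂ)) ^ k / (k.factorial : ℂ)) x := by
  unfold aaP
  apply HasDerivAt.fun_sum
  intro k _
  have hgd : HasDerivAt (iteratedDeriv k f) (iteratedDeriv (k + 1) f x) x := by
    rw [iteratedDeriv_succ]
    exact ((hf.differentiable_iteratedDeriv k (by exact_mod_cast (ENat.coe_lt_top k))) x).hasDerivAt
  exact (hgd.mul_const _).div_const _

private lemma aaP_hasDerivAt_snd (f : ℝ → ℂ) (n : ℕ) (x y : ℝ) :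
    HasDerivAt (fun s => aaP f n x s)
      (∑ k ∈ Finset.range (n + 1),
        iteratedDeriv k f x * ((k : ℂ) * (Complex.I * (y : ℂ)) ^ (k - 1) * Complex.I)
          / (k.factorial : ℂ)) y := by
  unfold aaP
  apply HasDerivAt.fun_sum
  intro k _
  have h : HasDerivAt (fun s : ℝ => (Complex.I * (s : ℂ)) ^ k)
      ((k : ℂ) * (Complex.I * (y : ℂ)) ^ (k - 1) * Complex.I) y := by
    have h' : HasDerivAt (fun z : ℂ => (Complex.I * z) ^ k)
        ((k : ℂ) * (Complex.I * (y : ℂ)) ^ (k - 1) * Complex.I) (y : ℂ) := by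
      simpa using ((hasDerivAt_id ((y : ℝ) : ℂ)).const_mul Complex.I).fun_pow k
    exact h'.comp_ofReal
  exact (h.const_mul _).div_const _

private lemma aa_sum_identity (f : ℝ → ℂ) (n : ℕ) (x y : ℝ) :
    (∑ k ∈ Finset.range (n + 1),
        iteratedDeriv (k + 1) f x * (Complex.I * (y : ℂ)) ^ k / (k.factorial : ℂ))
      + Complex.I * (∑ k ∈ Finset.range (n + 1),
          iteratedDeriv k f x * ((k : ℂ) * (Complex.I * (y : ℂ)) ^ (k - 1) * Complex.I)
            / (k.factorial : ℂ))
    = iteratedDeriv (n + 1) f x * (Complex.I * (y : ℂ)) ^ n / (n.factorial : ℂ) := by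
  have h2 : (∑ k ∈ Finset.range (n + 1),
      iteratedDeriv k f x * ((k : ℂ) * (Complex.I * (y : ℂ)) ^ (k - 1) * Complex.I)
        / (k.factorial : ℂ))
      = Complex.I * ∑ k ∈ Finset.range n,
          iteratedDeriv (k + 1) f x * (Complex.I * (y : ℂ)) ^ k / (k.factorial : ℂ) := by
    rw [Finset.sum_range_succ', Finset.mul_sum]
    simp only [Nat.cast_zero, zero_mul, mul_zero, zero_div, add_zero]
    apply Finset.sum_congr rfl
    intro k _
    have hk : ((k : ℂ) + 1) ≠ 0 := by
      exact_mod_cast (Nat.cast_add_one_ne_zero k : ((k : ℂ) + 1) ≠ 0)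
    have hf1 : ((k.factorial : ℂ)) ≠ 0 := by exact_mod_cast Nat.factorial_ne_zero k
    push_cast [Nat.factorial_succ]
    field_simp
  rw [h2, Finset.sum_range_succ]
  have hI := Complex.I_mul_I
  linear_combination (∑ k ∈ Finset.range n,
    iteratedDeriv (k + 1) f x * (Complex.I * (y : ℂ)) ^ k / (k.factorial : ℂ)) * hI

/-- Almost analytic extension of order `n`: for `f ∈ C_c^∞(ℝ; ℂ)` and a smooth
compactly supported cutoff `χ` equal to `1` on a neighborhood of
`supp f × {0}`, the function
`f̃(x,y) = (∑_{k=0}^n f^{(k)}(x) (iy)^k / k!) χ(x,y)` satisfies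
`f̃(x,0) = f(x)`, `∂̄f̃(x,0) = 0`, and `|∂̄f̃(x,y)| ≤ C |y|^n`. -/
theorem almost_analytic_extension
    (f : ℝ → ℂ) (hf : ContDiff ℝ (⊤ : ℕ∞) f) (hfc : HasCompactSupport f)
    (n : ℕ) (hn : 1 ≤ n)
    (χ : ℝ × ℝ → ℝ) (hχ : ContDiff ℝ (⊤ : ℕ∞) χ) (hχc : HasCompactSupport χ)
    (U : Set (ℝ × ℝ)) (hU : IsOpen U)
    (hUsupp : tsupport f ×ˢ ({0} : Set ℝ) ⊆ U)
    (hχone : ∀ p ∈ U, χ p = 1)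
    (ft : ℝ × ℝ → ℂ)
    (hft : ∀ x y : ℝ, ft (x, y) =
      (∑ k ∈ Finset.range (n + 1),
        iteratedDeriv k f x * (Complex.I * (y : ℂ)) ^ k / (k.factorial : ℂ))
        * (χ (x, y) : ℂ))
    (dbar : ℝ × ℝ → ℂ)
    (hdbar : ∀ x y : ℝ, dbar (x, y) =
      (1 / 2 : ℂ) * (deriv (fun s => ft (s, y)) x
        + Complex.I * deriv (fun s => ft (x, s)) y)) :
    (∀ x : ℝ, ft (x, 0) = f x) ∧
    (∀ x : ℝ, dbar (x, 0) = 0) ∧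
    ∃ C : ℝ, ∀ x y : ℝ, ‖dbar (x, y)‖ ≤ C * |y| ^ n := by
  classical
  -- iterated derivatives vanish outside the support of `f`
  have hfk : ∀ (k : ℕ) (x : ℝ), x ∉ tsupport f → iteratedDeriv k f x = 0 := by
    intro k x hx
    have h := tsupport_iteratedFDeriv_subset (𝕜 := ℝ) (f := f) k
    have h0 : iteratedFDeriv ℝ k f x = 0 :=
      image_eq_zero_of_notMem_tsupport fun hc => hx (h hc)
    rw [iteratedDeriv_eq_iteratedFDeriv, h0]; simp
  -- partial derivatives of χ
  have hχdiff : Differentiable ℝ χ := hχ.differentiable (by simp)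
  have hχx : ∀ x y : ℝ, HasDerivAt (fun s => χ (s, y)) (fderiv ℝ χ (x, y) (1, 0)) x := by
    intro x y
    have hc : HasDerivAt (fun s : ℝ => (s, y)) ((1 : ℝ), (0 : ℝ)) x :=
      (hasDerivAt_id x).prodMk (hasDerivAt_const x y)
    exact (hχdiff (x, y)).hasFDerivAt.comp_hasDerivAt x hc
  have hχy : ∀ x y : ℝ, HasDerivAt (fun s => χ (x, s)) (fderiv ℝ χ (x, y) (0, 1)) y := by
    intro x y
    have hc : HasDerivAt (fun s : ℝ => (x, s)) ((0 : ℝ), (1 : ℝ)) y :=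
      (hasDerivAt_const y x).prodMk (hasDerivAt_id y)
    exact (hχdiff (x, y)).hasFDerivAt.comp_hasDerivAt y hc
  -- partial derivatives of ft
  have hftx : ∀ x y : ℝ, deriv (fun s => ft (s, y)) x =
      (∑ k ∈ Finset.range (n + 1),
        iteratedDeriv (k + 1) f x * (Complex.I * (y : ℂ)) ^ k / (k.factorial : ℂ))
        * (χ (x, y) : ℂ) + aaP f n x y * ((fderiv ℝ χ (x, y) (1, 0) : ℝ) : ℂ) := by
    intro x y
    have heq : (fun s => ft (s, y)) = fun s => aaP f n s y * ((χ (s, y) : ℝ) : ℂ) := by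
      funext s; rw [hft s y]; rfl
    rw [heq]
    exact ((aaP_hasDerivAt_fst f hf n x y).mul (hχx x y).ofReal_comp).deriv
  have hfty : ∀ x y : ℝ, deriv (fun s => ft (x, s)) y =
      (∑ k ∈ Finset.range (n + 1),
        iteratedDeriv k f x * ((k : ℂ) * (Complex.I * (y : ℂ)) ^ (k - 1) * Complex.I)
          / (k.factorial : ℂ))
        * (χ (x, y) : ℂ) + aaP f n x y * ((fderiv ℝ χ (x, y) (0, 1) : ℝ) : ℂ) := by
    intro x y
    have heq : (fun s => ft (x, s)) = fun s => aaP f n x s * ((χ (x, s) : ℝ) : ℂ) := by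
      funext s; rw [hft x s]; rfl
    rw [heq]
    exact ((aaP_hasDerivAt_snd f n x y).mul (hχy x y).ofReal_comp).deriv
  -- the "error term"
  set h : ℝ × ℝ → ℂ := fun p => aaP f n p.1 p.2 *
      (((fderiv ℝ χ p (1, 0) : ℝ) : ℂ) + Complex.I * ((fderiv ℝ χ p (0, 1) : ℝ) : ℂ))
    with hhdef
  -- key formula for dbar
  have hkey : ∀ x y : ℝ, dbar (x, y) = (1 / 2 : ℂ) *
      (iteratedDeriv (n + 1) f x * (Complex.I * (y : ℂ)) ^ n / (n.factorial : ℂ)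
          * (χ (x, y) : ℂ) + h (x, y)) := by
    intro x y
    rw [hdbar x y, hftx x y, hfty x y, hhdef]
    have hs := aa_sum_identity f n x y
    linear_combination ((1 / 2 : ℂ) * ((χ (x, y) : ℝ) : ℂ)) * hs
  -- part 1
  have part1 : ∀ x : ℝ, ft (x, 0) = f x := by
    intro x
    rw [hft x 0]
    have h0 : (∑ k ∈ Finset.range (n + 1),
        iteratedDeriv k f x * (Complex.I * ((0 : ℝ) : ℂ)) ^ k / (k.factorial : ℂ)) = f x :=
      aaP_zero f n x
    rw [h0]
    by_cases hx : x ∈ tsupport f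
    · have h1 : χ (x, 0) = 1 := hχone (x, 0) (hUsupp (Set.mk_mem_prod hx rfl))
      rw [h1]; simp
    · rw [image_eq_zero_of_notMem_tsupport hx]; simp
  -- the error term vanishes on an open neighborhood of ℝ × {0}
  have hVopen : IsOpen (U ∪ ((tsupport f)ᶜ ×ˢ (Set.univ : Set ℝ))) :=
    hU.union ((isClosed_tsupport f).isOpen_compl.prod isOpen_univ)
  have hfd0 : ∀ p ∈ U, fderiv ℝ χ p = 0 := by
    intro p hp
    have hev : χ =ᶠ[nhds p] fun _ => (1 : ℝ) :=
      Filter.eventually_of_mem (hU.mem_nhds hp) hχone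
    rw [hev.fderiv_eq]; exact fderiv_const_apply 1
  have hPzero : ∀ x y : ℝ, x ∉ tsupport f → aaP f n x y = 0 := by
    intro x y hx
    unfold aaP
    apply Finset.sum_eq_zero
    intro k _
    rw [hfk k x hx]; simp
  have hhV : ∀ p : ℝ × ℝ, p ∈ U ∪ ((tsupport f)ᶜ ×ˢ (Set.univ : Set ℝ)) → h p = 0 := by
    intro p hp
    rcases hp with hp | hp
    · rw [hhdef]; simp [hfd0 p hp]
    · rw [hhdef]; simp [hPzero p.1 p.2 hp.1]
  have hsupp_h : tsupport h ⊆ (U ∪ ((tsupport f)ᶜ ×ˢ (Set.univ : Set ℝ)))ᶜ := by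
    apply closure_minimal _ hVopen.isClosed_compl
    intro p hp hpV
    exact hp (hhV p hpV)
  have hy_ne : ∀ p ∈ tsupport h, p.2 ≠ 0 := by
    intro p hp hp2
    apply hsupp_h hp
    by_cases h1 : p.1 ∈ tsupport f
    · exact Or.inl (hUsupp (Set.mem_prod.mpr ⟨h1, hp2⟩))
    · exact Or.inr (Set.mem_prod.mpr ⟨h1, trivial⟩)
  -- continuity of the error term
  have hPcont : Continuous fun p : ℝ × ℝ => aaP f n p.1 p.2 := by
    unfold aaP
    apply continuous_finset_sum
    intro k _
    apply Continuous.div_const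
    apply Continuous.mul
    · exact (hf.continuous_iteratedDeriv k (by exact_mod_cast (le_top : ((k : ℕ) : ℕ∞) ≤ ⊤))).comp continuous_fst
    · exact (continuous_const.mul (Complex.continuous_ofReal.comp continuous_snd)).pow k
  have hABcont : Continuous fun p : ℝ × ℝ =>
      (((fderiv ℝ χ p (1, 0) : ℝ) : ℂ) + Complex.I * ((fderiv ℝ χ p (0, 1) : ℝ) : ℂ)) := by
    have hc : Continuous (fderiv ℝ χ) := hχ.continuous_fderiv (by simp)
    exact (Complex.continuous_ofReal.comp (hc.clm_apply continuous_const)).add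
      (continuous_const.mul (Complex.continuous_ofReal.comp (hc.clm_apply continuous_const)))
  have hhcont : Continuous h := by rw [hhdef]; exact hPcont.mul hABcont
  -- compact support of the error term
  have hsupp2 : Function.support h ⊆ tsupport χ := by
    intro p hp
    by_contra hpc
    apply hp
    have hev : χ =ᶠ[nhds p] fun _ => (0 : ℝ) :=
      Filter.eventually_of_mem ((isClosed_tsupport χ).isOpen_compl.mem_nhds hpc)
        fun q hq => image_eq_zero_of_notMem_tsupport hq
    have hfd : fderiv ℝ χ p = 0 := by rw [hev.fderiv_eq]; exact fderiv_const_apply 0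
    rw [hhdef]; simp [hfd]
  have hhc : HasCompactSupport h := hχc.mono' hsupp2
  -- bound for the error term
  obtain ⟨M3, hM3⟩ := hhc.exists_bound_of_continuous hhcont
  have hM3nn : 0 ≤ M3 := le_trans (norm_nonneg _) (hM3 (0, 0))
  have hC2ex : ∃ C2 : ℝ, 0 ≤ C2 ∧ ∀ p : ℝ × ℝ, ‖h p‖ ≤ C2 * |p.2| ^ n := by
    by_cases hK : tsupport h = ∅
    · refine ⟨0, le_refl 0, fun p => ?_⟩
      have hp0 : h p = 0 := by
        by_contra hp
        have : p ∈ tsupport h := subset_closure (Function.mem_support.mpr hp)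
        rw [hK] at this; exact this
      simp [hp0]
    · obtain ⟨p₀, hp₀K, hmin⟩ := hhc.exists_isMinOn (Set.nonempty_iff_ne_empty.mpr hK)
        (continuous_snd.abs.continuousOn)
      have hδpos : 0 < |p₀.2| := abs_pos.mpr (hy_ne p₀ hp₀K)
      refine ⟨M3 / |p₀.2| ^ n, div_nonneg hM3nn (by positivity), fun p => ?_⟩
      by_cases hp : h p = 0
      · rw [hp, norm_zero]
        exact mul_nonneg (div_nonneg hM3nn (by positivity)) (by positivity)
      · have hpK : p ∈ tsupport h := subset_closure (Function.mem_support.mpr hp)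
        have hδle : |p₀.2| ≤ |p.2| := (isMinOn_iff.mp hmin) p hpK
        calc ‖h p‖ ≤ M3 := hM3 p
          _ = (M3 / |p₀.2| ^ n) * |p₀.2| ^ n := by field_simp
          _ ≤ (M3 / |p₀.2| ^ n) * |p.2| ^ n :=
              mul_le_mul_of_nonneg_left (pow_le_pow_left₀ hδpos.le hδle n)
                (div_nonneg hM3nn (by positivity))
  obtain ⟨C2, hC2nn, hC2⟩ := hC2ex
  -- bounds for the first term
  have hgc : HasCompactSupport (iteratedDeriv (n + 1) f) :=
    hfc.mono' (fun x hx => by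
      by_contra hxc
      exact hx (hfk (n + 1) x hxc))
  obtain ⟨M1, hM1⟩ := hgc.exists_bound_of_continuous
    (hf.continuous_iteratedDeriv (n + 1) (by exact_mod_cast (le_top : ((n + 1 : ℕ) : ℕ∞) ≤ ⊤)))
  obtain ⟨M2, hM2⟩ := hχc.exists_bound_of_continuous hχ.continuous
  have hM1nn : 0 ≤ M1 := le_trans (norm_nonneg _) (hM1 0)
  have hM2nn : 0 ≤ M2 := le_trans (norm_nonneg _) (hM2 (0, 0))
  -- the final bound
  have part3 : ∀ x y : ℝ, ‖dbar (x, y)‖ ≤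
      ((1 / 2 : ℝ) * (M1 * M2 / (n.factorial : ℝ) + C2)) * |y| ^ n := by
    intro x y
    rw [hkey x y]
    have hT1 : ‖iteratedDeriv (n + 1) f x * (Complex.I * (y : ℂ)) ^ n / (n.factorial : ℂ)
        * (χ (x, y) : ℂ)‖ ≤ M1 * M2 / (n.factorial : ℝ) * |y| ^ n := by
      have he : ‖iteratedDeriv (n + 1) f x * (Complex.I * (y : ℂ)) ^ n / (n.factorial : ℂ)
          * (χ (x, y) : ℂ)‖
          = ‖iteratedDeriv (n + 1) f x‖ * |y| ^ n / (n.factorial : ℝ) * ‖χ (x, y)‖ := by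
        simp [norm_mul, norm_div, norm_pow, Complex.norm_real, Complex.norm_natCast,
          Real.norm_eq_abs, Complex.norm_I]
      rw [he]
      have h1 : ‖iteratedDeriv (n + 1) f x‖ * |y| ^ n / (n.factorial : ℝ) * ‖χ (x, y)‖
          ≤ M1 * |y| ^ n / (n.factorial : ℝ) * M2 := by
        gcongr
        · exact hM1 x
        · exact hM2 (x, y)
      calc ‖iteratedDeriv (n + 1) f x‖ * |y| ^ n / (n.factorial : ℝ) * ‖χ (x, y)‖
          ≤ M1 * |y| ^ n / (n.factorial : ℝ) * M2 := h1
        _ = M1 * M2 / (n.factorial : ℝ) * |y| ^ n := by ring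
    have hT2 : ‖h (x, y)‖ ≤ C2 * |y| ^ n := hC2 (x, y)
    calc ‖(1 / 2 : ℂ) * (iteratedDeriv (n + 1) f x * (Complex.I * (y : ℂ)) ^ n
            / (n.factorial : ℂ) * (χ (x, y) : ℂ) + h (x, y))‖
        = (1 / 2 : ℝ) * ‖iteratedDeriv (n + 1) f x * (Complex.I * (y : ℂ)) ^ n
            / (n.factorial : ℂ) * (χ (x, y) : ℂ) + h (x, y)‖ := by
          rw [norm_mul]; norm_num
      _ ≤ (1 / 2 : ℝ) * (‖iteratedDeriv (n + 1) f x * (Complex.I * (y : ℂ)) ^ n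
            / (n.factorial : ℂ) * (χ (x, y) : ℂ)‖ + ‖h (x, y)‖) :=
          mul_le_mul_of_nonneg_left (norm_add_le _ _) (by norm_num)
      _ ≤ (1 / 2 : ℝ) * (M1 * M2 / (n.factorial : ℝ) * |y| ^ n + C2 * |y| ^ n) :=
          mul_le_mul_of_nonneg_left (add_le_add hT1 hT2) (by norm_num)
      _ = ((1 / 2 : ℝ) * (M1 * M2 / (n.factorial : ℝ) + C2)) * |y| ^ n := by ring
  -- part 2 follows from part 3
  have part2 : ∀ x : ℝ, dbar (x, 0) = 0 := by
    intro x
    have h3 := part3 x 0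
    rw [abs_zero, zero_pow (Nat.one_le_iff_ne_zero.mp hn), mul_zero] at h3
    exact norm_le_zero_iff.mp h3
  exact ⟨part1, part2, ⟨_, part3⟩⟩
end

section
/- Let g, h : ℝ³ → ℂ be Schwartz functions. Then ∫_{ℝ³} conj(h(k)) · g(k) · e^{i|k|t} dk → 0 as t → ∞. -/
/-!
In polar coordinates `x = r • y` the phase `e^{i‖x‖t} = e^{irt}` only sees the radius, so
`∫ F(x) e^{i‖x‖t} dx = ∫_{r > 0} G(r) e^{irt} dr` with `G(r) = r^{n-1} ∫_{‖y‖=1} F(r • y) dσ(y)`,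
and the claim is the one-dimensional Riemann–Lebesgue lemma for `G`.
-/

open MeasureTheory Filter Set Metric Complex Topology

theorem Real.tendsto_integral_exp_mul_I_smul_cocompact {V : Type*} [NormedAddCommGroup V]
    [NormedSpace ℂ V] (G : ℝ → V) :
    Tendsto (fun t : ℝ ↦ ∫ r, Complex.exp (I * (r * t : ℝ)) • G r) (cocompact ℝ) (𝓝 0) := by
  have hscale : Tendsto (fun t : ℝ ↦ -(2 * Real.pi)⁻¹ * t) (cocompact ℝ) (cocompact ℝ) :=
    (Homeomorph.mulLeft₀ _ (by simp [Real.pi_ne_zero])).toCocompactMap.cocompact_tendsto'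
  refine ((Real.tendsto_integral_exp_smul_cocompact G).comp hscale).congr fun t ↦ ?_
  refine integral_congr_ae (Eventually.of_forall fun r ↦ ?_)
  simp only [Circle.smul_def, Real.fourierChar_apply]
  rw [mul_comm I]
  congr 4
  field_simp

namespace MeasureTheory

theorem integral_volumeIoiPow {V : Type*} [NormedAddCommGroup V] [NormedSpace ℝ V]
    (n : ℕ) (f : ℝ → V) :
    ∫ r : Ioi (0 : ℝ), f r ∂Measure.volumeIoiPow n = ∫ r in Ioi 0, r ^ n • f r := by
  simp only [Measure.volumeIoiPow, ENNReal.ofReal]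
  rw [integral_withDensity_eq_integral_smul (measurable_subtype_coe.pow_const _).real_toNNReal,
    integral_subtype_comap measurableSet_Ioi fun r ↦ (r ^ n).toNNReal • f r]
  refine setIntegral_congr_fun measurableSet_Ioi fun r hr ↦ ?_
  rw [NNReal.smul_def, Real.coe_toNNReal _ (pow_nonneg (le_of_lt hr) _)]

variable {E V : Type*} [NormedAddCommGroup E] [NormedSpace ℝ E] [MeasurableSpace E]
  [NormedAddCommGroup V]

noncomputable def radialProfile [NormedSpace ℝ V] (μ : Measure E) (F : E → V) (r : ℝ) : V :=
  r ^ (Module.finrank ℝ E - 1) • ∫ y, F (r • (y : E)) ∂μ.toSphere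

theorem radialProfile_smul_comp_norm [NormedSpace ℂ V] (μ : Measure E) (c : ℝ → ℂ) (F : E → V)
    {r : ℝ} (hr : 0 ≤ r) :
    radialProfile μ (fun x ↦ c ‖x‖ • F x) r = c r • radialProfile μ F r := by
  have hnorm : ∀ y : sphere (0 : E) 1, ‖r • (y : E)‖ = r := fun y ↦ by
    rw [norm_smul, norm_eq_of_mem_sphere y, mul_one, Real.norm_of_nonneg hr]
  simp only [radialProfile, hnorm, integral_smul]
  exact smul_comm _ _ _

variable [BorelSpace E]

theorem measurableEmbedding_smul_sphere :
    MeasurableEmbedding fun p : sphere (0 : E) 1 × Ioi (0 : ℝ) ↦ (p.2 : ℝ) • (p.1 : E) :=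
  (MeasurableEmbedding.subtype_coe (measurableSet_singleton 0).compl).comp
    (homeomorphUnitSphereProd E).symm.measurableEmbedding

variable [FiniteDimensional ℝ E] [Nontrivial E] (μ : Measure E) [μ.IsAddHaarMeasure]

theorem map_smul_toSphere_prod_volumeIoiPow :
    (μ.toSphere.prod (Measure.volumeIoiPow (Module.finrank ℝ E - 1))).map
      (fun p ↦ (p.2 : ℝ) • (p.1 : E)) = μ := by
  let Φ := (homeomorphUnitSphereProd E).toMeasurableEquiv
  have hpolar : (fun p : sphere (0 : E) 1 × Ioi (0 : ℝ) ↦ (p.2 : ℝ) • (p.1 : E)) =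
      Subtype.val ∘ Φ.symm := rfl
  rw [← (μ.measurePreserving_homeomorphUnitSphereProd).map_eq, hpolar,
    ← Measure.map_map measurable_subtype_coe Φ.symm.measurable,
    show (homeomorphUnitSphereProd E : _ → _) = Φ from rfl, MeasurableEquiv.map_symm_map,
    map_comap_subtype_coe (measurableSet_singleton 0).compl, restrict_compl_singleton]

theorem integral_eq_integral_radialProfile [NormedSpace ℝ V] {F : E → V} (hF : Integrable F μ) :
    ∫ x, F x ∂μ = ∫ r in Ioi 0, radialProfile μ F r := by
  have hmap := map_smul_toSphere_prod_volumeIoiPow μ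
  rw [← hmap, measurableEmbedding_smul_sphere.integrable_map_iff] at hF
  conv_lhs => rw [← hmap, measurableEmbedding_smul_sphere.integral_map]
  exact (integral_prod_symm _ hF).trans
    (integral_volumeIoiPow _ fun r ↦ ∫ y, F (r • (y : E)) ∂μ.toSphere)

theorem tendsto_integral_exp_norm_mul_I_smul_cocompact [NormedSpace ℂ V] {F : E → V}
    (hF : Integrable F μ) :
    Tendsto (fun t : ℝ ↦ ∫ x, Complex.exp (I * (‖x‖ * t : ℝ)) • F x ∂μ) (cocompact ℝ) (𝓝 0) := by
  refine (Real.tendsto_integral_exp_mul_I_smul_cocompact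
    ((Ioi 0).indicator (radialProfile μ F))).congr fun t ↦ ?_
  have hFt : Integrable (fun x ↦ Complex.exp (I * (‖x‖ * t : ℝ)) • F x) μ :=
    hF.bdd_smul 1 (by fun_prop : Continuous _).aestronglyMeasurable
      (Eventually.of_forall fun x ↦ by simp [Complex.norm_exp])
  rw [integral_eq_integral_radialProfile μ hFt, ← integral_indicator measurableSet_Ioi]
  congr 1 with r
  by_cases hr : 0 < r
  · rw [indicator_of_mem (mem_Ioi.2 hr), indicator_of_mem (mem_Ioi.2 hr),
      radialProfile_smul_comp_norm μ (fun s ↦ Complex.exp (I * (s * t : ℝ))) F hr.le]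
  · simp [hr]

end MeasureTheory

/-- Riemann–Lebesgue-type statement with the radial phase `ω(k) = |k|`:
for Schwartz functions `g, h` on `ℝ³`,
`∫ conj(h(k)) g(k) e^{i|k|t} dk → 0` as `t → ∞`. -/
theorem radial_riemann_lebesgue
    (g h : SchwartzMap (EuclideanSpace ℝ (Fin 3)) ℂ) :
    Tendsto
      (fun t : ℝ => ∫ (k : EuclideanSpace ℝ (Fin 3)),
        (starRingEnd ℂ) (h k) * g k * Complex.exp (Complex.I * ((‖k‖ * t : ℝ) : ℂ)))
      atTop (nhds 0) := by
  have hF : Integrable fun k ↦ (starRingEnd ℂ) (h k) * g k :=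
    g.integrable.bdd_mul (c := ‖h.toBoundedContinuousFunction‖)
      (by fun_prop : Continuous _).aestronglyMeasurable
      (Eventually.of_forall fun k ↦ by
        simpa using h.toBoundedContinuousFunction.norm_coe_le_norm k)
  refine ((tendsto_integral_exp_norm_mul_I_smul_cocompact volume hF).mono_left
    atTop_le_cocompact).congr fun t ↦ ?_
  simp only [smul_eq_mul, mul_comm]
end
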